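/- For every integer n ≥ 2 and every i ∈ {0,1,...,n−1}, the Poisson bracket of E_{i,1} with the coordinate function q^1 equals minus the momentum p_{n−i}: {E_{i,1}, q^1} = −p_{n−i} identically on ℝ^{2n}. -/

import Mathlib

/-!
Since `q^1` is a position coordinate, `{E, q^1} = -∂E/∂p_1`. As `K_1 = I`, `E_{i,1}` is the
quadratic form `½ pᵀ (L^i G) p`, and `L^i G` is symmetric because `G` and `L G` are, so
`∂E/∂p_1 = p · (L^i G e_1)`. Finally `G e_1 = e_n` and `L` shifts `e_{k+1}` to `e_k`, whence
`L^i G e_1 = e_{n-i}`.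
-/

open Matrix

noncomputable section

/-- Phase space ℝ^{2n}: pairs (q, p). -/
abbrev Phase (n : ℕ) := (Fin n → ℝ) × (Fin n → ℝ)

/-- Extended coordinates: `qext n q m` is `q^m` (1-based), with `q^0 := 1`
and `q^m := 0` for `m < 0` or `m > n`. -/
def qext (n : ℕ) (q : Fin n → ℝ) (m : ℤ) : ℝ :=
  if h : 1 ≤ m ∧ m ≤ (n : ℤ) then q ⟨m.toNat - 1, by omega⟩
  else if m = 0 then 1 else 0

/-- The matrix `L(q)`: first column `-q^j`, superdiagonal `1`, all other entries `0`. -/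
def Lmat (n : ℕ) (q : Fin n → ℝ) : Matrix (Fin n) (Fin n) ℝ :=
  Matrix.of fun j k => if (k : ℕ) = 0 then -q j else if (k : ℕ) = (j : ℕ) + 1 then 1 else 0

/-- The contravariant metric `G(q)` with entries `G^{jk} = q^{j+k-n-1}` (1-based indices). -/
def Gmat (n : ℕ) (q : Fin n → ℝ) : Matrix (Fin n) (Fin n) ℝ :=
  Matrix.of fun j k => qext n q ((j : ℤ) + (k : ℤ) + 1 - (n : ℤ))

/-- The Killing tensors: `K_r = Σ_{k=0}^{r-1} q^k L^{r-1-k}` (so `K_1 = I`). -/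
def Kmat (n : ℕ) (q : Fin n → ℝ) (r : ℕ) : Matrix (Fin n) (Fin n) ℝ :=
  ∑ k ∈ Finset.range r, qext n q (k : ℤ) • (Lmat n q) ^ (r - 1 - k)

/-- `E_{i,r}(q,p) = (1/2) Σ_{l,m} (K_r L^i G)^{lm} p_l p_m`. -/
def Efun (n i r : ℕ) : Phase n → ℝ := fun x =>
  (1 / 2) * ∑ l : Fin n, ∑ m : Fin n,
    (Kmat n x.1 r * (Lmat n x.1) ^ i * Gmat n x.1) l m * x.2 l * x.2 m

/-- Canonical Poisson bracket on `ℝ^{2n}`. -/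
def pb (n : ℕ) (f g : Phase n → ℝ) : Phase n → ℝ := fun x =>
  ∑ i : Fin n,
    (fderiv ℝ f x (Pi.single i 1, 0) * fderiv ℝ g x (0, Pi.single i 1)
      - fderiv ℝ f x (0, Pi.single i 1) * fderiv ℝ g x (Pi.single i 1, 0))

section MatrixEntries

variable {𝕜 E : Type*} [NontriviallyNormedField 𝕜] [NormedAddCommGroup E] [NormedSpace 𝕜 E]
  {ι κ : Type*}

theorem differentiable_matrix_mul_apply [Fintype κ] {M : E → Matrix ι κ 𝕜}
    {N : E → Matrix κ ι 𝕜} (hM : ∀ j k, Differentiable 𝕜 fun q => M q j k)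
    (hN : ∀ j k, Differentiable 𝕜 fun q => N q j k) (j k : ι) :
    Differentiable 𝕜 fun q => (M q * N q) j k := by
  simp only [Matrix.mul_apply]
  fun_prop

theorem differentiable_matrix_pow_apply [Fintype ι] [DecidableEq ι] {M : E → Matrix ι ι 𝕜}
    (hM : ∀ j k, Differentiable 𝕜 fun q => M q j k) (i : ℕ) (j k : ι) :
    Differentiable 𝕜 fun q => (M q ^ i) j k := by
  induction i generalizing j k with
  | zero => simp only [pow_zero]; fun_prop
  | succ i ih => simp only [pow_succ]; exact differentiable_matrix_mul_apply ih hM j k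

theorem Matrix.IsSymm.pow_mul {R : Type*} [CommSemiring R] [Fintype ι] [DecidableEq ι]
    {L G : Matrix ι ι R} (hG : G.IsSymm) (hLG : (L * G).IsSymm) (i : ℕ) :
    (L ^ i * G).IsSymm := by
  have h : SemiconjBy G Lᵀ L := by
    rw [SemiconjBy, ← hLG.eq, Matrix.transpose_mul, hG.eq]
  calc (L ^ i * G)ᵀ = (G * Lᵀ ^ i)ᵀ := by rw [(h.pow_right i).eq]
    _ = L ^ i * G := by
      rw [Matrix.transpose_mul, Matrix.transpose_pow, Matrix.transpose_transpose, hG.eq]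

end MatrixEntries

def quadraticInMomenta {n : ℕ} (A : (Fin n → ℝ) → Matrix (Fin n) (Fin n) ℝ) : Phase n → ℝ :=
  fun x => (1 / 2) * ∑ l : Fin n, ∑ m : Fin n, A x.1 l m * x.2 l * x.2 m

section QuadraticInMomenta

variable {n : ℕ} {A : (Fin n → ℝ) → Matrix (Fin n) (Fin n) ℝ}

theorem differentiable_quadraticInMomenta (hA : ∀ l m, Differentiable ℝ fun q => A q l m) :
    Differentiable ℝ (quadraticInMomenta A) := by
  have hA' : ∀ l m, Differentiable ℝ fun x : Phase n => A x.1 l m :=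
    fun l m => (hA l m).comp differentiable_fst
  unfold quadraticInMomenta
  fun_prop

theorem hasLineDerivAt_quadraticInMomenta (x : Phase n) (v : Fin n → ℝ) :
    HasLineDerivAt ℝ (quadraticInMomenta A)
      ((1 / 2) * (v ⬝ᵥ A x.1 *ᵥ x.2 + x.2 ⬝ᵥ A x.1 *ᵥ v)) x (0, v) := by
  have hp (l : Fin n) : HasDerivAt (fun t : ℝ => x.2 l + t * v l) (v l) 0 := by
    simpa using ((hasDerivAt_id (0 : ℝ)).mul_const (v l)).const_add (x.2 l)
  have hsum : HasDerivAt
      (fun t : ℝ => ∑ l, ∑ m, A x.1 l m * (x.2 l + t * v l) * (x.2 m + t * v m))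
      (∑ l, ∑ m, (A x.1 l m * v l * (x.2 m + 0 * v m) + A x.1 l m * (x.2 l + 0 * v l) * v m)) 0 :=
    .fun_sum fun l _ => .fun_sum fun m _ => ((hp l).const_mul (A x.1 l m)).mul (hp m)
  have hline : (fun t : ℝ => quadraticInMomenta A (x + t • ((0 : Fin n → ℝ), v))) =
      fun t => (1 / 2) * ∑ l, ∑ m, A x.1 l m * (x.2 l + t * v l) * (x.2 m + t * v m) := by
    ext t
    simp [quadraticInMomenta]
  rw [HasLineDerivAt, hline]
  refine (hsum.const_mul (1 / 2 : ℝ)).congr_deriv (congrArg _ ?_)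
  simp only [dotProduct, mulVec, Finset.mul_sum, ← Finset.sum_add_distrib]
  refine Finset.sum_congr rfl fun l _ => Finset.sum_congr rfl fun m _ => ?_
  ring

theorem fderiv_quadraticInMomenta_momentum (hA : ∀ l m, Differentiable ℝ fun q => A q l m)
    (x : Phase n) (hsymm : (A x.1).IsSymm) (v : Fin n → ℝ) :
    fderiv ℝ (quadraticInMomenta A) x (0, v) = x.2 ⬝ᵥ A x.1 *ᵥ v := by
  rw [← ((differentiable_quadraticInMomenta hA) x).lineDeriv_eq_fderiv,
    (hasLineDerivAt_quadraticInMomenta x v).lineDeriv, dotProduct_comm, ← vecMul_transpose,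
    hsymm.eq, ← dotProduct_mulVec]
  ring

end QuadraticInMomenta

theorem pb_coord_fst {n : ℕ} (f : Phase n → ℝ) (j : Fin n) (x : Phase n) :
    pb n f (fun y => y.1 j) x = -fderiv ℝ f x (0, Pi.single j 1) := by
  let π : Phase n →L[ℝ] ℝ :=
    (ContinuousLinearMap.proj j).comp (ContinuousLinearMap.fst ℝ (Fin n → ℝ) (Fin n → ℝ))
  have hπ : fderiv ℝ (fun y : Phase n => y.1 j) x = π := π.hasFDerivAt.fderiv
  simp [pb, hπ, π, Pi.single_apply]

section Coefficients

variable {n : ℕ} (q : Fin n → ℝ)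

theorem qext_of_nonpos {m : ℤ} (hm : m ≤ 0) : qext n q m = if m = 0 then 1 else 0 := by
  rw [qext, dif_neg (by omega)]

theorem qext_natCast_add_one (k : Fin n) : qext n q ((k : ℤ) + 1) = q k := by
  rw [qext, dif_pos ⟨by omega, by omega⟩]
  congr

theorem differentiable_qext (m : ℤ) : Differentiable ℝ fun q : Fin n → ℝ => qext n q m := by
  unfold qext
  split_ifs <;> fun_prop

theorem differentiable_Lmat_apply (j k : Fin n) :
    Differentiable ℝ fun q : Fin n → ℝ => Lmat n q j k := by
  simp only [Lmat, Matrix.of_apply]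
  split_ifs <;> fun_prop

theorem differentiable_Gmat_apply (j k : Fin n) :
    Differentiable ℝ fun q : Fin n → ℝ => Gmat n q j k :=
  differentiable_qext _

theorem Kmat_one : Kmat n q 1 = 1 := by
  simp [Kmat, qext_of_nonpos]

theorem Gmat_isSymm : (Gmat n q).IsSymm := by
  ext j k
  simp only [Matrix.transpose_apply, Gmat, Matrix.of_apply, add_comm (k : ℤ)]

theorem Lmat_mul_Gmat_apply (j k : Fin n) :
    (Lmat n q * Gmat n q) j k = qext n q ((j : ℤ) + k + 2 - n)
      - (if (k : ℕ) = n - 1 then q j else 0) - (if (j : ℕ) = n - 1 then q k else 0) := by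
  let g : ℕ → ℝ := fun l => qext n q ((l : ℤ) + k + 1 - n)
  -- only the first column and the superdiagonal of `L` contribute
  have hrow : (Lmat n q * Gmat n q) j k =
      ∑ l ∈ Finset.range n, ((if l = 0 then -q j else 0) + if l = j + 1 then 1 else 0) * g l := by
    rw [Matrix.mul_apply, ← Fin.sum_univ_eq_sum_range]
    refine Finset.sum_congr rfl fun l _ => ?_
    simp only [Lmat, Gmat, Matrix.of_apply, g]
    split_ifs <;> first | omega | ring
  have hg0 : g 0 = if (k : ℕ) = n - 1 then 1 else 0 := by
    simp only [g, qext_of_nonpos q (show ((0 : ℕ) : ℤ) + k + 1 - n ≤ 0 by omega)]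
    grind
  simp only [hrow, add_mul, ite_mul, zero_mul, one_mul, Finset.sum_add_distrib,
    Finset.sum_ite_eq', Finset.mem_range, hg0]
  have hn : 0 < n := j.pos
  rcases Nat.lt_or_ge (j + 1) n with hj | hj
  · simp only [g, if_pos hn, if_pos hj, if_neg (show (j : ℕ) ≠ n - 1 by omega)]
    push_cast
    split_ifs <;> ring_nf
  · have hlast : qext n q ((j : ℤ) + k + 2 - n) = q k := by
      rw [show (j : ℤ) + k + 2 - n = (k : ℤ) + 1 by omega, qext_natCast_add_one]
    simp only [if_pos hn, if_neg (show ¬(j : ℕ) + 1 < n by omega),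
      if_pos (show (j : ℕ) = n - 1 by omega), hlast]
    split_ifs <;> ring

theorem Lmat_mul_Gmat_isSymm : (Lmat n q * Gmat n q).IsSymm := by
  ext j k
  rw [Matrix.transpose_apply, Lmat_mul_Gmat_apply, Lmat_mul_Gmat_apply, add_comm (k : ℤ)]
  ring

theorem Gmat_mulVec_single_zero (hn : 0 < n) :
    Gmat n q *ᵥ Pi.single ⟨0, hn⟩ 1 = Pi.single ⟨n - 1, by omega⟩ 1 := by
  ext j
  simp only [mulVec_single_one, Matrix.col_apply, Gmat, Matrix.of_apply, Pi.single_apply,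
    Fin.ext_iff]
  rw [qext_of_nonpos q (by omega)]
  grind

theorem Lmat_mulVec_single_succ (k : ℕ) (hk : k + 1 < n) :
    Lmat n q *ᵥ Pi.single ⟨k + 1, hk⟩ 1 = Pi.single ⟨k, by omega⟩ 1 := by
  ext j
  simp only [mulVec_single_one, Matrix.col_apply, Lmat, Matrix.of_apply, Pi.single_apply,
    Fin.ext_iff]
  grind

theorem Lmat_pow_mulVec_single (i k : ℕ) (hik : i ≤ k) (hk : k < n) :
    Lmat n q ^ i *ᵥ Pi.single ⟨k, hk⟩ 1 = Pi.single ⟨k - i, by omega⟩ 1 := by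
  induction i generalizing k with
  | zero => simp only [pow_zero, one_mulVec, Nat.sub_zero]
  | succ i ih =>
    obtain ⟨k, rfl⟩ : ∃ k', k = k' + 1 := ⟨k - 1, by omega⟩
    rw [pow_succ, ← mulVec_mulVec, Lmat_mulVec_single_succ, ih k (by omega)]
    simp only [Nat.add_sub_add_right]

end Coefficients

theorem Efun_one (n i : ℕ) :
    Efun n i 1 = quadraticInMomenta fun q => Lmat n q ^ i * Gmat n q := by
  funext x
  simp only [Efun, Kmat_one, one_mul, quadraticInMomenta]

/-- for `i ∈ {0,…,n−1}`, `{E_{i,1}, q^1} = −p_{n−i}` identically on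
`ℝ^{2n}`. -/
theorem Efun_pb_q1 (n : ℕ) (i : ℕ) (hi : i < n) (x : Phase n) :
    pb n (Efun n i 1) (fun y => y.1 ⟨0, by omega⟩) x = -x.2 ⟨n - i - 1, by omega⟩ := by
  have hdiff (l m : Fin n) : Differentiable ℝ fun q => (Lmat n q ^ i * Gmat n q) l m :=
    differentiable_matrix_mul_apply (differentiable_matrix_pow_apply differentiable_Lmat_apply i)
      differentiable_Gmat_apply l m
  have hsymm := (Gmat_isSymm x.1).pow_mul (Lmat_mul_Gmat_isSymm x.1) i
  rw [pb_coord_fst, Efun_one, fderiv_quadraticInMomenta_momentum hdiff x hsymm, ← mulVec_mulVec,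
    Gmat_mulVec_single_zero, Lmat_pow_mulVec_single _ i (n - 1) (by omega), dotProduct_single_one]
  simp_rw [Nat.sub_right_comm n 1 i]
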